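/- arXiv:1207.2112 — 4 statements merged into one kernel-verified Lean document; each statement's English description precedes it below -/
import Mathlib

section
/- Let D be a densely defined closed operator on a Hilbert space H such that dom D² ∩ dom(D*)² is suitably dense. On the domain dom D_E², the square of the Wick rotated operator satisfies D_E² = (1/2)(DD* + D*D) + (i/2)(D² - (D*)²). -/
open scoped InnerProductSpace
open LinearPMap

/-- Let `D` be a densely defined closed operator on a complex Hilbert space `H`.
On the domain of `D_E²` (i.e. for vectors `x` for which all the relevant applications are
defined), the square of the Wick rotated operator `D_E = (e^{iπ/4}/√2)(D - i D*)` satisfies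
`D_E² = (1/2)(D D* + D* D) + (i/2)(D² - (D*)²)`. -/
theorem wick_rotated_operator_square
    {H : Type*} [NormedAddCommGroup H] [InnerProductSpace ℂ H] [CompleteSpace H]
    (D : H →ₗ.[ℂ] H) (hdense : Dense (D.domain : Set H)) (hclosed : D.IsClosed)
    (hdense2 : Dense ((D.domain ⊓ (D†).domain : Submodule ℂ H) : Set H))
    (c : ℂ) (hc : c = Complex.exp (Real.pi / 4 * Complex.I) / (Real.sqrt 2 : ℂ))
    (x : H) (hx : x ∈ D.domain) (hx' : x ∈ (D†).domain)
    (hDx : D ⟨x, hx⟩ ∈ D.domain) (hDx' : D ⟨x, hx⟩ ∈ (D†).domain)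
    (hD'x : (D†) ⟨x, hx'⟩ ∈ D.domain) (hD'x' : (D†) ⟨x, hx'⟩ ∈ (D†).domain) :
    c • (D ⟨c • (D ⟨x, hx⟩ - Complex.I • (D†) ⟨x, hx'⟩),
            D.domain.smul_mem c (D.domain.sub_mem hDx (D.domain.smul_mem _ hD'x))⟩
        - Complex.I • (D†) ⟨c • (D ⟨x, hx⟩ - Complex.I • (D†) ⟨x, hx'⟩),
            (D†).domain.smul_mem c ((D†).domain.sub_mem hDx' ((D†).domain.smul_mem _ hD'x'))⟩)
      = ((1 : ℂ) / 2) • (D ⟨(D†) ⟨x, hx'⟩, hD'x⟩ + (D†) ⟨D ⟨x, hx⟩, hDx'⟩)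
        + (Complex.I / 2) • (D ⟨D ⟨x, hx⟩, hDx⟩ - (D†) ⟨(D†) ⟨x, hx'⟩, hD'x'⟩) := by

  have hcc : c * c = Complex.I / 2 := by
    rw [hc, div_mul_div_comm, ← Complex.exp_add]
    have h2 : (Real.sqrt 2 : ℂ) * (Real.sqrt 2 : ℂ) = 2 := by
      rw [← Complex.ofReal_mul, Real.mul_self_sqrt (by norm_num)]
      norm_num
    rw [h2]
    congr 1
    rw [← add_mul]
    have h4 : (Real.pi / 4 : ℂ) + Real.pi / 4 = ((Real.pi / 2 : ℝ) : ℂ) := by push_cast; ring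
    rw [h4, Complex.exp_mul_I, ← Complex.ofReal_cos, ← Complex.ofReal_sin,
      Real.cos_pi_div_two, Real.sin_pi_div_two]
    simp
  set p : D.domain := ⟨D ⟨x, hx⟩, hDx⟩
  set q : D.domain := ⟨(D†) ⟨x, hx'⟩, hD'x⟩
  set p' : (D†).domain := ⟨D ⟨x, hx⟩, hDx'⟩
  set q' : (D†).domain := ⟨(D†) ⟨x, hx'⟩, hD'x'⟩
  have e1 : (⟨c • (D ⟨x, hx⟩ - Complex.I • (D†) ⟨x, hx'⟩),
      D.domain.smul_mem c (D.domain.sub_mem hDx (D.domain.smul_mem _ hD'x))⟩ : D.domain)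
      = c • (p - Complex.I • q) := rfl
  have e2 : (⟨c • (D ⟨x, hx⟩ - Complex.I • (D†) ⟨x, hx'⟩),
      (D†).domain.smul_mem c ((D†).domain.sub_mem hDx' ((D†).domain.smul_mem _ hD'x'))⟩ : (D†).domain)
      = c • (p' - Complex.I • q') := rfl
  rw [e1, e2, D.map_smul, (D†).map_smul, D.map_sub, (D†).map_sub, D.map_smul, (D†).map_smul]
  match_scalars
  · linear_combination hcc
  · linear_combination -Complex.I * hcc + (-1/2 : ℂ) * Complex.I_sq
  · linear_combination -Complex.I * hcc + (-1/2 : ℂ) * Complex.I_sq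
  · linear_combination -hcc + c * c * Complex.I_sq
end

section
/- Let T be a symmetric operator on a Hilbert space H with dom T² dense. If T² is essentially self-adjoint on dom T², then T is essentially self-adjoint. -/
/-!
Let `S` be the closure of `T`: it is closed and symmetric, so it is self-adjoint as soon as no
`ξ ≠ 0` satisfies `⟪ξ, S x⟫ = c ⟪ξ, x⟫` for `c = ±i` (then `S + i` has closed range with trivial
orthogonal complement, hence is onto, and this forces `dom S† ⊆ dom S`). Such a `ξ` satisfies
`⟪ξ, T² x + x⟫ = (c² + 1) ⟪ξ, x⟫ = 0` on `dom T²`, so the closure `A` of `T²` has `A† ξ = -ξ`.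
As `A = A†` is nonnegative, being the closure of `T²` with `⟪T² x, x⟫ = ‖T x‖²`, we get `ξ = 0`.
-/

open scoped InnerProductSpace
open LinearPMap

/-- Composition `S ∘ T` of partially defined linear operators, with the maximal natural
domain `{x ∈ dom T | T x ∈ dom S}`. -/
noncomputable def LinearPMap.pcomp {H : Type*} [AddCommGroup H] [Module ℂ H]
    (S T : H →ₗ.[ℂ] H) : H →ₗ.[ℂ] H :=
  S.comp (T.domRestrict (Submodule.map T.domain.subtype (Submodule.comap T.toFun S.domain)))
    (by
      rintro ⟨x, hx⟩
      have hx2 := hx.2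
      obtain ⟨⟨y, hy⟩, hy2, (hy3 : y = x)⟩ := hx.1
      subst hy3
      have : T.domRestrict _ ⟨y, hx⟩ = T ⟨y, hy⟩ := domRestrict_apply rfl
      rw [this]
      exact hy2)

open Complex

namespace LinearPMap

section Closure

variable {R E F : Type*} [CommRing R] [AddCommGroup E] [AddCommGroup F] [Module R E] [Module R F]
  [TopologicalSpace E] [TopologicalSpace F] [ContinuousAdd E] [ContinuousAdd F]
  [TopologicalSpace R] [ContinuousSMul R E] [ContinuousSMul R F]

theorem graph_closure_subset_closure_graph (f : E →ₗ.[R] F) :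
    (f.closure.graph : Set (E × F)) ⊆ _root_.closure f.graph := by
  by_cases hf : f.IsClosable
  · rw [← hf.graph_closure_eq_closure_graph, Submodule.topologicalClosure_coe]
  · rw [closure_def' hf]
    exact subset_closure

theorem closure_induction {f : E →ₗ.[R] F} {p : E × F → Prop} (hp : _root_.IsClosed {q | p q})
    (h : ∀ x : f.domain, p (x, f x)) (x : f.closure.domain) : p (x, f.closure x) := by
  refine closure_minimal ?_ hp (f.graph_closure_subset_closure_graph (f.closure.mem_graph x))
  rintro _ hq
  obtain ⟨y, rfl⟩ := (mem_graph_iff' f).mp hq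
  exact h y

end Closure

section RCLike

variable {𝕜 E F : Type*} [RCLike 𝕜] [NormedAddCommGroup E] [InnerProductSpace 𝕜 E]
  [NormedAddCommGroup F] [InnerProductSpace 𝕜 F]

theorem IsFormalAdjoint.closure {T : E →ₗ.[𝕜] F} {S : F →ₗ.[𝕜] E} (h : T.IsFormalAdjoint S) :
    T.closure.IsFormalAdjoint S.closure := by
  have hT : ∀ (x : T.closure.domain) (y : S.domain), ⟪T.closure x, (y : F)⟫_𝕜 = ⟪(x : E), S y⟫_𝕜 :=
    fun x y ↦ closure_induction (p := fun q ↦ ⟪q.2, (y : F)⟫_𝕜 = ⟪q.1, S y⟫_𝕜)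
      (isClosed_eq (by fun_prop) (by fun_prop)) (fun x ↦ h x y) x
  exact fun x y ↦ closure_induction (p := fun q ↦ ⟪T.closure x, q.1⟫_𝕜 = ⟪(x : E), q.2⟫_𝕜)
    (isClosed_eq (by fun_prop) (by fun_prop)) (hT x) y

theorem eq_zero_of_inner_apply_add_self_eq_zero [CompleteSpace E] {R : E →ₗ.[𝕜] E}
    (hpos : ∀ x : R.domain, 0 ≤ RCLike.re ⟪R x, (x : E)⟫_𝕜) (hR : IsSelfAdjoint R.closure)
    {ξ : E} (hξ : ∀ x : R.domain, ⟪ξ, R x + x⟫_𝕜 = 0) : ξ = 0 := by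
  have hξ' : ∀ x : R.closure.domain, ⟪ξ, R.closure x + x⟫_𝕜 = 0 :=
    closure_induction (p := fun q ↦ ⟪ξ, q.2 + q.1⟫_𝕜 = 0)
      (isClosed_eq (by fun_prop) (by fun_prop)) hξ
  have hpos' : ∀ x : R.closure.domain, 0 ≤ RCLike.re ⟪R.closure x, (x : E)⟫_𝕜 :=
    closure_induction (p := fun q ↦ 0 ≤ RCLike.re ⟪q.2, q.1⟫_𝕜)
      (isClosed_le continuous_const (by fun_prop)) hpos
  have hmem : (ξ, -ξ) ∈ (R.closure†).graph := by
    rw [adjoint_graph_eq_graph_adjoint hR.dense_domain, Submodule.mem_adjoint_iff]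
    intro a b hab
    obtain ⟨x, hx, hRx⟩ := (mem_graph_iff _).mp hab
    dsimp only at hx hRx ⊢
    rw [← hx, ← hRx, inner_neg_right, sub_neg_eq_add, ← inner_add_left]
    exact inner_eq_zero_symm.mp (hξ' x)
  rw [isSelfAdjoint_def.mp hR] at hmem
  obtain ⟨x, hx, hRx⟩ := (mem_graph_iff _).mp hmem
  have hnonneg := hpos' x
  dsimp only at hx hRx
  rw [hRx, hx, inner_neg_left, inner_self_eq_norm_sq_to_K] at hnonneg
  simpa using hnonneg

end RCLike

section Complex

variable {H : Type*} [NormedAddCommGroup H] [InnerProductSpace ℂ H]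

theorem IsFormalAdjoint.norm_apply_add_I_smul_sq {S : H →ₗ.[ℂ] H} (hS : S.IsFormalAdjoint S)
    (x : S.domain) : ‖S x + I • (x : H)‖ ^ 2 = ‖S x‖ ^ 2 + ‖(x : H)‖ ^ 2 := by
  have hreal : (⟪S x, (x : H)⟫_ℂ).im = 0 := by
    have := congrArg Complex.im ((hS x x).trans (inner_conj_symm _ _).symm)
    rw [Complex.conj_im] at this
    linarith
  rw [@norm_add_sq ℂ, inner_smul_right, norm_smul]
  simp [hreal]

variable [CompleteSpace H]

theorem IsClosed.isClosed_range_add_I_smul {S : H →ₗ.[ℂ] H} (hS : S.IsClosed)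
    (hsymm : S.IsFormalAdjoint S) :
    _root_.IsClosed (Set.range fun x : S.domain ↦ S x + I • (x : H)) := by
  have : CompleteSpace S.graph := hS.completeSpace_coe
  let g : S.graph →L[ℂ] H :=
    (ContinuousLinearMap.snd ℂ H H + I • ContinuousLinearMap.fst ℂ H H).comp S.graph.subtypeL
  have hg : AntilipschitzWith 1 g := by
    refine g.antilipschitz_of_bound fun ⟨p, hp⟩ ↦ ?_
    obtain ⟨x, rfl⟩ := (mem_graph_iff' S).mp hp
    have hsq := hsymm.norm_apply_add_I_smul_sq x
    have : ‖((x : H), S x)‖ ≤ ‖S x + I • (x : H)‖ := by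
      rw [Prod.norm_def, max_le_iff]
      constructor <;>
        nlinarith [norm_nonneg (S x), norm_nonneg (x : H), norm_nonneg (S x + I • (x : H))]
    simpa [g] using this
  convert hg.isClosed_range g.uniformContinuous using 1
  ext y
  constructor
  · rintro ⟨x, rfl⟩
    exact ⟨⟨_, S.mem_graph x⟩, rfl⟩
  · rintro ⟨⟨p, hp⟩, rfl⟩
    obtain ⟨x, rfl⟩ := (mem_graph_iff' S).mp hp
    exact ⟨x, rfl⟩

theorem IsClosed.exists_apply_add_I_smul_eq {S : H →ₗ.[ℂ] H} (hS : S.IsClosed)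
    (hsymm : S.IsFormalAdjoint S)
    (hdef : ∀ ξ : H, (∀ x : S.domain, ⟪ξ, S x⟫_ℂ = -I * ⟪ξ, (x : H)⟫_ℂ) → ξ = 0) (y : H) :
    ∃ x : S.domain, S x + I • (x : H) = y := by
  let L : S.domain →ₗ[ℂ] H := S.toFun + I • S.domain.subtype
  have hclosed : _root_.IsClosed (LinearMap.range L : Set H) := hS.isClosed_range_add_I_smul hsymm
  have horth : (LinearMap.range L)ᗮ = ⊥ := by
    refine (Submodule.eq_bot_iff _).mpr fun ξ hξ ↦ hdef ξ fun x ↦ ?_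
    have := (Submodule.mem_orthogonal' _ ξ).mp hξ (L x) (LinearMap.mem_range_self L x)
    change ⟪ξ, S x + I • (x : H)⟫_ℂ = 0 at this
    rw [inner_add_right, inner_smul_right] at this
    linear_combination this
  have hrange : LinearMap.range L = ⊤ := by
    rw [← hclosed.submodule_topologicalClosure_eq, Submodule.topologicalClosure_eq_top_iff, horth]
  exact (hrange ▸ Submodule.mem_top : y ∈ LinearMap.range L)

theorem isSelfAdjoint_of_isClosed_of_isFormalAdjoint {S : H →ₗ.[ℂ] H}
    (hdense : Dense (S.domain : Set H)) (hS : S.IsClosed) (hsymm : S.IsFormalAdjoint S)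
    (hdef : ∀ c : ℂ, c ^ 2 = -1 →
      ∀ ξ : H, (∀ x : S.domain, ⟪ξ, S x⟫_ℂ = c * ⟪ξ, (x : H)⟫_ℂ) → ξ = 0) :
    IsSelfAdjoint S := by
  have hle : S ≤ S† := hsymm.le_adjoint hdense
  refine isSelfAdjoint_def.mpr (eq_of_le_of_domain_eq hle (le_antisymm hle.1 fun ξ hξ ↦ ?_)).symm
  obtain ⟨x, hx⟩ := hS.exists_apply_add_I_smul_eq hsymm (hdef (-I) (by simp))
    (S† ⟨ξ, hξ⟩ + I • ξ)
  have : ξ - x = 0 := by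
    refine hdef I I_sq _ fun v ↦ ?_
    have := congrArg (⟪·, (v : H)⟫_ℂ) hx
    simp only [inner_add_left, inner_smul_left, conj_I] at this
    rw [inner_sub_left, inner_sub_left, ← adjoint_isFormalAdjoint hdense ⟨ξ, hξ⟩ v, ← hsymm x v]
    linear_combination -this
  rw [sub_eq_zero.mp this]
  exact x.2

end Complex

theorem exists_pcomp_apply {H : Type*} [AddCommGroup H] [Module ℂ H] (S T : H →ₗ.[ℂ] H)
    (x : (S.pcomp T).domain) :
    ∃ (hx : (x : H) ∈ T.domain) (hTx : T ⟨x, hx⟩ ∈ S.domain),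
      S.pcomp T x = S ⟨T ⟨x, hx⟩, hTx⟩ := by
  obtain ⟨⟨⟨y, hy⟩, hTy, rfl⟩, hx⟩ := Submodule.mem_inf.mp x.2
  exact ⟨hx, hTy, congrArg S (Subtype.ext (domRestrict_apply rfl))⟩

theorem eq_zero_of_inner_apply_eq_mul_inner {H : Type*} [NormedAddCommGroup H]
    [InnerProductSpace ℂ H] [CompleteSpace H] {T : H →ₗ.[ℂ] H} (hsymm : T.IsFormalAdjoint T)
    (hsq : IsSelfAdjoint (T.pcomp T).closure) {c : ℂ} (hc : c ^ 2 = -1) {ξ : H}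
    (hξ : ∀ x : T.domain, ⟪ξ, T x⟫_ℂ = c * ⟪ξ, (x : H)⟫_ℂ) : ξ = 0 := by
  refine eq_zero_of_inner_apply_add_self_eq_zero (fun x ↦ ?_) hsq fun x ↦ ?_
  · obtain ⟨hx, hTx, hTTx⟩ := exists_pcomp_apply T T x
    have hTT := hsymm ⟨_, hTx⟩ ⟨x, hx⟩
    dsimp only at hTT
    rw [hTTx, hTT, inner_self_eq_norm_sq_to_K]
    norm_cast
    positivity
  · obtain ⟨hx, hTx, hTTx⟩ := exists_pcomp_apply T T x
    rw [hTTx, inner_add_right, hξ ⟨_, hTx⟩, hξ ⟨x, hx⟩]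
    linear_combination ⟪ξ, (x : H)⟫_ℂ * hc

end LinearPMap

theorem essSelfAdjoint_of_sq_essSelfAdjoint_general
    {H : Type*} [NormedAddCommGroup H] [InnerProductSpace ℂ H] [CompleteSpace H]
    (T : H →ₗ.[ℂ] H) (hdense : Dense (T.domain : Set H))
    (hsymm : ∀ x y : T.domain, ⟪T x, (y : H)⟫_ℂ = ⟪(x : H), T y⟫_ℂ)
    (hess : IsSelfAdjoint (T.pcomp T).closure) :
    IsSelfAdjoint T.closure := by
  have hsymm : T.IsFormalAdjoint T := hsymm
  have hclosable : T.IsClosable :=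
    (adjoint_isClosed hdense).isClosable.leIsClosable (hsymm.le_adjoint hdense)
  refine isSelfAdjoint_of_isClosed_of_isFormalAdjoint (hdense.mono T.le_closure.1)
    hclosable.closure_isClosed hsymm.closure fun c hc ξ hξ ↦ ?_
  exact eq_zero_of_inner_apply_eq_mul_inner hsymm hess hc fun x ↦
    (congrArg _ (T.le_closure.2 rfl)).trans (hξ ⟨x, T.le_closure.1 x.2⟩)

/-- Let `T` be a symmetric operator on a Hilbert space `H` with `dom T²` dense.
If `T²` is essentially self-adjoint on `dom T²`, then `T` is essentially self-adjoint. -/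
theorem essSelfAdjoint_of_sq_essSelfAdjoint
    {H : Type*} [NormedAddCommGroup H] [InnerProductSpace ℂ H] [CompleteSpace H]
    (T : H →ₗ.[ℂ] H) (hdense : Dense (T.domain : Set H))
    (hsymm : ∀ x y : T.domain, ⟪T x, (y : H)⟫_ℂ = ⟪(x : H), T y⟫_ℂ)
    (hdense2 : Dense (((T.pcomp T).domain : Submodule ℂ H) : Set H))
    (hess : IsSelfAdjoint (T.pcomp T).closure) :
    IsSelfAdjoint T.closure :=
  essSelfAdjoint_of_sq_essSelfAdjoint_general T hdense hsymm hess
end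

section
/- Let D be a densely defined closed operator on H with ⟨D⟩² essentially self-adjoint with closure N. Then ‖(1+N)^{-1/2} R_D (1+N)^{-1/2}‖ ≤ 2, where R_D := (i/2)(D² - (D*)²). -/
open scoped InnerProductSpace
open LinearPMap

/-- The operator `⟨D⟩² = (1/2)(D D* + D* D)` on `dom D D* ∩ dom D* D`. -/
noncomputable def meanSquare {H : Type*} [NormedAddCommGroup H] [InnerProductSpace ℂ H]
    [CompleteSpace H] (D : H →ₗ.[ℂ] H) : H →ₗ.[ℂ] H :=
  ((1 : ℂ) / 2) • (D.pcomp (D†) + (D†).pcomp D)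

/-!
For `v ∈ dom ⟨D⟩²` one has `2 Re⟪⟨D⟩² v, v⟫ = ‖D v‖² + ‖D* v‖²`, and because `D` and `D*` are
closed this form bound passes to the closure `N`. As `B² = (1 + N)⁻¹`,
`Re⟪N B² y, B² y⟫ = ‖B y‖² - ‖B² y‖²`, so `‖D B² y‖², ‖D* B² y‖² ≤ 2 ‖B y‖²`; the range of `B`
is dense, and closedness once more gives `‖D B x‖², ‖D* B x‖² ≤ 2 ‖x‖²`. For `w = R_D B x`,
moving one `D` or `D*` across the inner product,
`‖B w‖² = ⟪w, B² w⟫ = (i/2)‾ (⟪D B x, D* B² w⟫ - ⟪D* B x, D B² w⟫) ≤ 2 ‖x‖ ‖B w‖`.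
-/

open Filter Topology

theorem mul_le_of_sq_le_mul_sq {a b c x y : ℝ} (hc : 0 ≤ c) (hx : 0 ≤ x) (hy : 0 ≤ y)
    (ha : a ^ 2 ≤ c * x ^ 2) (hb : b ^ 2 ≤ c * y ^ 2) : a * b ≤ c * x * y := by
  refine le_of_sq_le_sq ?_ (by positivity)
  calc (a * b) ^ 2 = a ^ 2 * b ^ 2 := mul_pow a b 2
    _ ≤ (c * x ^ 2) * (c * y ^ 2) := mul_le_mul ha hb (sq_nonneg b) (by positivity)
    _ = (c * x * y) ^ 2 := by ring

theorem cauchySeq_of_dist_sq_le_mul {α β γ : Type*} [PseudoMetricSpace α]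
    [PseudoMetricSpace β] [PseudoMetricSpace γ] {f : ℕ → α} {g : ℕ → β} {h : ℕ → γ}
    (hg : CauchySeq g) (hh : CauchySeq h) {c : ℝ} (hc : 0 ≤ c)
    (hf : ∀ n m, dist (f n) (f m) ^ 2 ≤ c * dist (g n) (g m) * dist (h n) (h m)) :
    CauchySeq f := by
  obtain ⟨b, hb0, hb, hb_lim⟩ := cauchySeq_iff_le_tendsto_0.1 hg
  obtain ⟨b', -, hb', hb'_lim⟩ := cauchySeq_iff_le_tendsto_0.1 hh
  refine cauchySeq_iff_le_tendsto_0.2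
    ⟨fun N => √(c * b N * b' N), fun _ => Real.sqrt_nonneg _, fun n m N hn hm => ?_, ?_⟩
  · refine Real.le_sqrt_of_sq_le ((hf n m).trans ?_)
    exact mul_le_mul (mul_le_mul_of_nonneg_left (hb n m N hn hm) hc) (hb' n m N hn hm)
      dist_nonneg (mul_nonneg hc (hb0 N))
  · simpa using ((hb_lim.const_mul c).mul hb'_lim).sqrt

theorem IsSelfAdjoint.inner_apply_apply_self {𝕜 E : Type*} [RCLike 𝕜] [NormedAddCommGroup E]
    [InnerProductSpace 𝕜 E] [CompleteSpace E] {B : E →L[𝕜] E} (hB : IsSelfAdjoint B) (x : E) :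
    ⟪x, B (B x)⟫_𝕜 = ⟪B x, B x⟫_𝕜 :=
  (hB.isSymmetric x (B x)).symm

theorem IsSelfAdjoint.denseRange_of_injective {𝕜 E : Type*} [RCLike 𝕜] [NormedAddCommGroup E]
    [InnerProductSpace 𝕜 E] [CompleteSpace E] {B : E →L[𝕜] E} (hB : IsSelfAdjoint B)
    (hinj : Function.Injective B) : DenseRange B := by
  have h : B.rangeᗮ = ⊥ := by
    rw [B.orthogonal_range, hB.adjoint_eq, LinearMap.ker_eq_bot.2 hinj]
  exact Submodule.dense_iff_topologicalClosure_eq_top.2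
    (Submodule.topologicalClosure_eq_top_iff.2 h)

namespace LinearPMap

section Topological

variable {R E F : Type*} [CommRing R] [AddCommGroup E] [AddCommGroup F] [Module R E]
  [Module R F] [TopologicalSpace E] [TopologicalSpace F]

theorem IsClosed.exists_apply_eq_of_tendsto {S : E →ₗ.[R] F} (hS : S.IsClosed)
    {u : ℕ → S.domain} {x : E} {y : F} (hux : Tendsto (fun n => (u n : E)) atTop (𝓝 x))
    (huy : Tendsto (fun n => S (u n)) atTop (𝓝 y)) : ∃ hx : x ∈ S.domain, S ⟨x, hx⟩ = y := by
  have hxy : (x, y) ∈ S.graph :=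
    hS.mem_of_tendsto (hux.prodMk_nhds huy) (Eventually.of_forall fun n => S.mem_graph (u n))
  obtain ⟨⟨x', hx'⟩, rfl : x' = x, rfl⟩ := S.mem_graph_iff.1 hxy
  exact ⟨hx', rfl⟩

variable [TopologicalSpace R] [ContinuousAdd E] [ContinuousAdd F] [ContinuousSMul R E]
  [ContinuousSMul R F]

theorem graph_closure_le_topologicalClosure (T : E →ₗ.[R] F) :
    T.closure.graph ≤ T.graph.topologicalClosure := by
  by_cases hT : T.IsClosable
  · rw [hT.graph_closure_eq_closure_graph]
  · rw [closure_def' hT]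
    exact T.graph.le_topologicalClosure

end Topological

section Normed

variable {𝕜 E F : Type*} [NormedField 𝕜] [NormedAddCommGroup E] [NormedSpace 𝕜 E]
  [NormedAddCommGroup F] [NormedSpace 𝕜 F]

theorem exists_seq_tendsto_closure (T : E →ₗ.[𝕜] F) (v : T.closure.domain) :
    ∃ a : ℕ → T.domain, Tendsto (fun n => (a n : E)) atTop (𝓝 v) ∧
      Tendsto (fun n => T (a n)) atTop (𝓝 (T.closure v)) := by
  have hv : ((v : E), T.closure v) ∈ _root_.closure (T.graph : Set (E × F)) :=
    T.graph_closure_le_topologicalClosure (T.closure.mem_graph v)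
  obtain ⟨p, hp, hp_lim⟩ := mem_closure_iff_seq_limit.1 hv
  choose a ha using fun n => T.mem_graph_iff'.1 (hp n)
  obtain rfl : p = fun n => ((a n : E), T (a n)) := funext fun n => (ha n).symm
  exact ⟨a, (continuous_fst.tendsto _).comp hp_lim, (continuous_snd.tendsto _).comp hp_lim⟩

theorem IsClosed.norm_sq_apply_le_of_denseRange [CompleteSpace F] {S : E →ₗ.[𝕜] F}
    (hS : S.IsClosed) {A : E →L[𝕜] E} (hA : DenseRange A) {c : ℝ} (hc : 0 ≤ c)
    (hSA : ∀ y, ∃ h : A (A y) ∈ S.domain, ‖S ⟨A (A y), h⟩‖ ^ 2 ≤ c * ‖A y‖ ^ 2)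
    (x : E) (hx : A x ∈ S.domain) : ‖S ⟨A x, hx⟩‖ ^ 2 ≤ c * ‖x‖ ^ 2 := by
  choose hdom hbound using hSA
  obtain ⟨p, hp, hpx⟩ := mem_closure_iff_seq_limit.1 (hA x)
  choose z hz using hp
  obtain rfl : p = fun n => A (z n) := funext fun n => (hz n).symm
  let u (n : ℕ) : S.domain := ⟨A (A (z n)), hdom (z n)⟩
  have hcauchy : CauchySeq fun n => S (u n) := by
    refine cauchySeq_of_dist_sq_le_mul hpx.cauchySeq hpx.cauchySeq hc fun n m => ?_
    have hu : u n - u m = ⟨A (A (z n - z m)), hdom _⟩ := Subtype.ext (by simp [u])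
    rw [dist_eq_norm, dist_eq_norm, ← S.map_sub, hu, mul_assoc, ← sq, ← _root_.map_sub]
    exact hbound _
  obtain ⟨l, hl⟩ := cauchySeq_tendsto_of_complete hcauchy
  obtain ⟨_, rfl⟩ :=
    hS.exists_apply_eq_of_tendsto (u := u) ((A.continuous.tendsto _).comp hpx) hl
  exact le_of_tendsto_of_tendsto' (hl.norm.pow 2) ((hpx.norm.pow 2).const_mul c)
    fun n => hbound (z n)

end Normed

section InnerProduct

variable {𝕜 E F : Type*} [RCLike 𝕜] [NormedAddCommGroup E] [InnerProductSpace 𝕜 E]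
  [NormedAddCommGroup F] [NormedSpace 𝕜 F]

/-- For `T ≥ 0` this says `‖S v‖ ≤ √c ‖T^{1/2} v‖` on `dom T`. -/
def IsFormBounded (S : E →ₗ.[𝕜] F) (T : E →ₗ.[𝕜] E) (c : ℝ) : Prop :=
  ∃ h : T.domain ≤ S.domain,
    ∀ v : T.domain, ‖S (Submodule.inclusion h v)‖ ^ 2 ≤ c * RCLike.re ⟪T v, (v : E)⟫_𝕜

theorem IsFormBounded.closure [CompleteSpace F] {S : E →ₗ.[𝕜] F} {T : E →ₗ.[𝕜] E} {c : ℝ}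
    (hST : S.IsFormBounded T c) (hS : S.IsClosed) (hc : 0 ≤ c) :
    S.IsFormBounded T.closure c := by
  obtain ⟨hdom, hbound⟩ := hST
  let S' : T.domain →ₗ[𝕜] F := S.toFun.comp (Submodule.inclusion hdom)
  have key : ∀ v : T.closure.domain, ∃ hv : (v : E) ∈ S.domain,
      ‖S ⟨v, hv⟩‖ ^ 2 ≤ c * RCLike.re ⟪T.closure v, (v : E)⟫_𝕜 := by
    intro v
    obtain ⟨a, ha, hTa⟩ := T.exists_seq_tendsto_closure v
    have hcauchy : CauchySeq fun n => S' (a n) := by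
      refine cauchySeq_of_dist_sq_le_mul hTa.cauchySeq ha.cauchySeq hc fun n m => ?_
      rw [dist_eq_norm, dist_eq_norm, dist_eq_norm, ← _root_.map_sub S', ← T.map_sub,
        ← Submodule.coe_sub, mul_assoc]
      exact (hbound _).trans (by gcongr; exact re_inner_le_norm _ _)
    obtain ⟨l, hl⟩ := cauchySeq_tendsto_of_complete hcauchy
    obtain ⟨hv, rfl⟩ :=
      hS.exists_apply_eq_of_tendsto (u := fun n => Submodule.inclusion hdom (a n)) ha hl
    refine ⟨hv, le_of_tendsto_of_tendsto' (hl.norm.pow 2) ?_ fun n => hbound (a n)⟩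
    exact ((RCLike.continuous_re.tendsto _).comp (hTa.inner ha)).const_mul c
  choose hdom' hbound' using key
  exact ⟨fun v hv => hdom' ⟨v, hv⟩, hbound'⟩

theorem IsFormBounded.exists_norm_sq_apply_sq_le [CompleteSpace E] {S : E →ₗ.[𝕜] F}
    {N : E →ₗ.[𝕜] E} {c : ℝ} (hSN : S.IsFormBounded N c) (hc : 0 ≤ c) {B : E →L[𝕜] E}
    (hB : IsSelfAdjoint B) (hBmem : ∀ x, B (B x) ∈ N.domain)
    (hB2 : ∀ x, B (B x) + N ⟨B (B x), hBmem x⟩ = x) (y : E) :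
    ∃ h : B (B y) ∈ S.domain, ‖S ⟨B (B y), h⟩‖ ^ 2 ≤ c * ‖B y‖ ^ 2 := by
  obtain ⟨hdom, hbound⟩ := hSN
  refine ⟨hdom (hBmem y), (hbound ⟨_, hBmem y⟩).trans ?_⟩
  have hN : N ⟨_, hBmem y⟩ = y - B (B y) := eq_sub_of_add_eq' (hB2 y)
  calc c * RCLike.re ⟪N ⟨_, hBmem y⟩, B (B y)⟫_𝕜 = c * (‖B y‖ ^ 2 - ‖B (B y)‖ ^ 2) := by
        rw [hN, inner_sub_left, _root_.map_sub, hB.inner_apply_apply_self,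
          inner_self_eq_norm_sq, inner_self_eq_norm_sq]
    _ ≤ c * ‖B y‖ ^ 2 := by gcongr; exact sub_le_self _ (sq_nonneg _)

theorem injective_of_add_apply_eq {N : E →ₗ.[𝕜] E} {B : E →L[𝕜] E}
    (hBmem : ∀ x, B (B x) ∈ N.domain) (hB2 : ∀ x, B (B x) + N ⟨B (B x), hBmem x⟩ = x) :
    Function.Injective B := by
  refine (injective_iff_map_eq_zero B).2 fun t ht => ?_
  have h0 : (⟨B (B t), hBmem t⟩ : N.domain) = 0 := Subtype.ext (by simp [ht])
  rw [← hB2 t, h0, N.map_zero, ht, _root_.map_zero, add_zero]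

theorem IsFormalAdjoint.norm_inner_smul_sub_le {A A' : E →ₗ.[𝕜] E}
    (h : A'.IsFormalAdjoint A) (r : 𝕜) {u : E} (hu : u ∈ A.domain) (hAu : A ⟨u, hu⟩ ∈ A.domain)
    (hu' : u ∈ A'.domain) (hA'u : A' ⟨u, hu'⟩ ∈ A'.domain) {v : E} (hv : v ∈ A.domain)
    (hv' : v ∈ A'.domain) :
    ‖⟪r • (A ⟨A ⟨u, hu⟩, hAu⟩ - A' ⟨A' ⟨u, hu'⟩, hA'u⟩), v⟫_𝕜‖ ≤
      ‖r‖ * (‖A ⟨u, hu⟩‖ * ‖A' ⟨v, hv'⟩‖ + ‖A' ⟨u, hu'⟩‖ * ‖A ⟨v, hv⟩‖) := by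
  rw [inner_smul_left, norm_mul, RCLike.norm_conj, inner_sub_left, h.symm ⟨_, hAu⟩ ⟨v, hv'⟩,
    h ⟨_, hA'u⟩ ⟨v, hv⟩]
  gcongr
  exact (norm_sub_le _ _).trans (add_le_add (norm_inner_le_norm _ _) (norm_inner_le_norm _ _))

end InnerProduct

theorem pcomp_apply {H : Type*} [AddCommGroup H] [Module ℂ H] (S T : H →ₗ.[ℂ] H)
    (v : (S.pcomp T).domain) :
    ∃ (hv : (v : H) ∈ T.domain) (hTv : T ⟨v, hv⟩ ∈ S.domain),
      S.pcomp T v = S ⟨T ⟨v, hv⟩, hTv⟩ := by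
  obtain ⟨⟨⟨y, hy⟩, hTy, rfl : y = v⟩, -⟩ := v.2
  exact ⟨hy, hTy, congr_arg S (Subtype.ext (domRestrict_apply rfl))⟩

end LinearPMap

section MeanSquare

variable {H : Type*} [NormedAddCommGroup H] [InnerProductSpace ℂ H] [CompleteSpace H]

theorem meanSquare_apply (D : H →ₗ.[ℂ] H) (v : (meanSquare D).domain) :
    ∃ (hD : (v : H) ∈ D.domain) (hD' : (v : H) ∈ (D†).domain)
      (hDD' : (D†) ⟨v, hD'⟩ ∈ D.domain) (hD'D : D ⟨v, hD⟩ ∈ (D†).domain),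
      meanSquare D v = (1 / 2 : ℂ) • (D ⟨(D†) ⟨v, hD'⟩, hDD'⟩ + (D†) ⟨D ⟨v, hD⟩, hD'D⟩) := by
  obtain ⟨hD', hDD', hP⟩ := pcomp_apply D (D†) ⟨v, v.2.1⟩
  obtain ⟨hD, hD'D, hQ⟩ := pcomp_apply (D†) D ⟨v, v.2.2⟩
  exact ⟨hD, hD', hDD', hD'D, by rw [← hP, ← hQ]; rfl⟩

theorem two_mul_re_inner_meanSquare {D : H →ₗ.[ℂ] H} (hdense : Dense (D.domain : Set H))
    (v : (meanSquare D).domain) :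
    ∃ (hD : (v : H) ∈ D.domain) (hD' : (v : H) ∈ (D†).domain),
      2 * (⟪meanSquare D v, (v : H)⟫_ℂ).re = ‖D ⟨v, hD⟩‖ ^ 2 + ‖(D†) ⟨v, hD'⟩‖ ^ 2 := by
  obtain ⟨hD, hD', hDD', hD'D, hv⟩ := meanSquare_apply D v
  have hadj := adjoint_isFormalAdjoint hdense
  refine ⟨hD, hD', ?_⟩
  rw [hv, inner_smul_left, inner_add_left, hadj.symm ⟨_, hDD'⟩ ⟨v, hD'⟩, hadj ⟨_, hD'D⟩ ⟨v, hD⟩,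
    inner_self_eq_norm_sq_to_K, inner_self_eq_norm_sq_to_K]
  simp [← Complex.ofReal_pow, add_comm]

theorem isFormBounded_meanSquare {D : H →ₗ.[ℂ] H} (hdense : Dense (D.domain : Set H)) :
    D.IsFormBounded (meanSquare D) 2 ∧ (D†).IsFormBounded (meanSquare D) 2 := by
  choose hD hD' h using two_mul_re_inner_meanSquare hdense
  exact ⟨⟨fun v hv => hD ⟨v, hv⟩,
      fun v => (le_add_of_nonneg_right (sq_nonneg _)).trans_eq (h v).symm⟩,
    ⟨fun v hv => hD' ⟨v, hv⟩,
      fun v => (le_add_of_nonneg_left (sq_nonneg _)).trans_eq (h v).symm⟩⟩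

theorem isFormBounded_meanSquare_closure {D : H →ₗ.[ℂ] H} (hdense : Dense (D.domain : Set H))
    (hclosed : D.IsClosed) :
    D.IsFormBounded (meanSquare D).closure 2 ∧ (D†).IsFormBounded (meanSquare D).closure 2 :=
  ⟨(isFormBounded_meanSquare hdense).1.closure hclosed zero_le_two,
    (isFormBounded_meanSquare hdense).2.closure (adjoint_isClosed hdense) zero_le_two⟩

end MeanSquare

theorem norm_resolvent_RD_resolvent_le_two_general
    {H : Type*} [NormedAddCommGroup H] [InnerProductSpace ℂ H] [CompleteSpace H]
    (D : H →ₗ.[ℂ] H) (hdense : Dense (D.domain : Set H)) (hclosed : D.IsClosed)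
    (B : H →L[ℂ] H) (hBsa : IsSelfAdjoint B)
    (hBmem : ∀ x : H, B (B x) ∈ (meanSquare D).closure.domain)
    (hB2 : ∀ x : H, B (B x) + (meanSquare D).closure ⟨B (B x), hBmem x⟩ = x) :
    ∀ (x : H) (h1 : B x ∈ D.domain) (h2 : D ⟨B x, h1⟩ ∈ D.domain)
      (h3 : B x ∈ (D†).domain) (h4 : (D†) ⟨B x, h3⟩ ∈ (D†).domain),
      ‖B ((Complex.I / 2) •
          (D ⟨D ⟨B x, h1⟩, h2⟩ - (D†) ⟨(D†) ⟨B x, h3⟩, h4⟩))‖ ≤ 2 * ‖x‖ := by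
  intro x h1 h2 h3 h4
  set w := (Complex.I / 2) • (D ⟨D ⟨B x, h1⟩, h2⟩ - (D†) ⟨(D†) ⟨B x, h3⟩, h4⟩)
  have hB : DenseRange B := hBsa.denseRange_of_injective (injective_of_add_apply_eq hBmem hB2)
  obtain ⟨hD, hD'⟩ := isFormBounded_meanSquare_closure hdense hclosed
  have hDB := hD.exists_norm_sq_apply_sq_le zero_le_two hBsa hBmem hB2
  have hD'B := hD'.exists_norm_sq_apply_sq_le zero_le_two hBsa hBmem hB2
  have hDx := hclosed.norm_sq_apply_le_of_denseRange hB zero_le_two hDB x h1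
  have hD'x := (adjoint_isClosed hdense).norm_sq_apply_le_of_denseRange hB zero_le_two hD'B x h3
  obtain ⟨hwD, hDw⟩ := hDB w
  obtain ⟨hwD', hD'w⟩ := hD'B w
  have key : ‖B w‖ ^ 2 ≤ 1 / 2 * (‖D ⟨B x, h1⟩‖ * ‖(D†) ⟨B (B w), hwD'⟩‖ +
      ‖(D†) ⟨B x, h3⟩‖ * ‖D ⟨B (B w), hwD⟩‖) :=
    calc ‖B w‖ ^ 2 = ‖⟪w, B (B w)⟫_ℂ‖ := by
          rw [hBsa.inner_apply_apply_self, inner_self_eq_norm_sq_to_K]; simp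
      _ ≤ _ := (adjoint_isFormalAdjoint hdense).norm_inner_smul_sub_le _ h1 h2 h3 h4 hwD hwD'
      _ = _ := by simp
  have hac := mul_le_of_sq_le_mul_sq zero_le_two (norm_nonneg x) (norm_nonneg (B w)) hDx hD'w
  have hbd := mul_le_of_sq_le_mul_sq zero_le_two (norm_nonneg x) (norm_nonneg (B w)) hD'x hDw
  nlinarith [norm_nonneg (B w), norm_nonneg x]

/-- Let `D` be a densely defined closed operator on `H` with `⟨D⟩²`
essentially self-adjoint with closure `N`.  With `B = (1+N)^{-1/2}` (the positive self-adjoint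
bounded operator with `B² = (1+N)^{-1}`), the operator `(1+N)^{-1/2} R_D (1+N)^{-1/2}`,
where `R_D := (i/2)(D² - (D*)²)`, is bounded with norm at most `2` (on the set of vectors
where it is defined, hence it extends to a bounded operator of norm at most `2`). -/
theorem norm_resolvent_RD_resolvent_le_two
    {H : Type*} [NormedAddCommGroup H] [InnerProductSpace ℂ H] [CompleteSpace H]
    (D : H →ₗ.[ℂ] H) (hdense : Dense (D.domain : Set H)) (hclosed : D.IsClosed)
    (hdense2 : Dense (((meanSquare D).domain : Submodule ℂ H) : Set H))
    (hess : IsSelfAdjoint (meanSquare D).closure)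
    (B : H →L[ℂ] H) (hBsa : IsSelfAdjoint B)
    (hBpos : ∀ x : H, 0 ≤ (⟪B x, x⟫_ℂ).re)
    (hBmem : ∀ x : H, B (B x) ∈ (meanSquare D).closure.domain)
    (hB2 : ∀ x : H, B (B x) + (meanSquare D).closure ⟨B (B x), hBmem x⟩ = x) :
    ∀ (x : H) (h1 : B x ∈ D.domain) (h2 : D ⟨B x, h1⟩ ∈ D.domain)
      (h3 : B x ∈ (D†).domain) (h4 : (D†) ⟨B x, h3⟩ ∈ (D†).domain),
      ‖B ((Complex.I / 2) •
          (D ⟨D ⟨B x, h1⟩, h2⟩ - (D†) ⟨(D†) ⟨B x, h3⟩, h4⟩))‖ ≤ 2 * ‖x‖ :=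
  norm_resolvent_RD_resolvent_le_two_general D hdense hclosed B hBsa hBmem hB2
end

section
/- Let T be a bounded operator on a Hilbert space H with bounded inverse, preserving dom(1+D²)^{1/2} for a self-adjoint D, and suppose δⁿ(T) := [(1+D²)^{1/2}, ·] applied n times to T is bounded for all n ≥ 0. Then δⁿ(T⁻¹) is bounded for all n ≥ 0; explicitly, δ(T⁻¹) = -T⁻¹ δ(T) T⁻¹. -/
/-! Since `Λ` is self-adjoint, `Λ - it` maps `dom Λ` bijectively onto `H` for real `t ≠ 0`, with an
inverse `R` of norm at most `1/|t|`. The commutator relation `ΛT = TΛ + δ(T)` gives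
`T R = R (T + δ(T) R)`, and for large `t` the operator `T + δ(T) R = T (1 + S δ(T) R)` is
invertible; hence `S` maps `dom Λ = range R` into itself, and then `δ(S) = -S δ(T) S`. By the
Leibniz rule, `δ` maps the algebra generated by `S` and the `δⁿ(T)` into itself, so all iterated
commutators of its elements, `S` among them, are bounded. -/

open scoped InnerProductSpace
open LinearPMap

/-- A bounded operator `T` lies in `OP⁰` for the positive self-adjoint operator
`Λ = (1+D²)^{1/2}`: all iterated commutators `δⁿ(T) = [Λ, ·]ⁿ(T)` are (extend to) bounded
operators.  This is encoded by a sequence `f` of bounded operators with `f 0 = T`, each `f n`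
preserving `dom Λ`, and `f (n+1)` extending the commutator `Λ (f n) - (f n) Λ` on `dom Λ`. -/
def InOPZero {H : Type*} [NormedAddCommGroup H] [InnerProductSpace ℂ H]
    (Λ : H →ₗ.[ℂ] H) (T : H →L[ℂ] H) : Prop :=
  ∃ (f : ℕ → (H →L[ℂ] H)) (hmem : ∀ (n : ℕ) (x : H), x ∈ Λ.domain → f n x ∈ Λ.domain),
    f 0 = T ∧
      ∀ (n : ℕ) (x : H) (hx : x ∈ Λ.domain),
        f (n + 1) x = Λ ⟨f n x, hmem n x hx⟩ - f n (Λ ⟨x, hx⟩)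

section Commutator

variable {𝕜 E : Type*} [NontriviallyNormedField 𝕜] [NormedAddCommGroup E] [NormedSpace 𝕜 E]
  {Λ : E →ₗ.[𝕜] E} {A B C D : E →L[𝕜] E}

/-- `B` maps `dom Λ` into itself and `ΛB - BΛ = C` there. -/
def IsCommutator (Λ : E →ₗ.[𝕜] E) (B C : E →L[𝕜] E) : Prop :=
  ∀ u : Λ.domain, (B u, B (Λ u) + C u) ∈ Λ.graph

namespace IsCommutator

theorem mem_domain (h : IsCommutator Λ B C) (u : Λ.domain) : B u ∈ Λ.domain := by
  obtain ⟨v, hv : (v : E) = B u, -⟩ := Λ.mem_graph_iff.1 (h u)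
  exact hv ▸ v.2

theorem apply (h : IsCommutator Λ B C) (u : Λ.domain) :
    Λ ⟨B u, h.mem_domain u⟩ = B (Λ u) + C u := by
  obtain ⟨v, hv : (v : E) = B u, hΛv⟩ := Λ.mem_graph_iff.1 (h u)
  obtain rfl : v = ⟨B u, h.mem_domain u⟩ := Subtype.ext hv
  exact hΛv

theorem _root_.isCommutator_iff : IsCommutator Λ B C ↔
    ∃ hmem : ∀ x ∈ Λ.domain, B x ∈ Λ.domain,
      ∀ (x : E) (hx : x ∈ Λ.domain), C x = Λ ⟨B x, hmem x hx⟩ - B (Λ ⟨x, hx⟩) := by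
  refine ⟨fun h => ⟨fun x hx => h.mem_domain ⟨x, hx⟩, fun x hx => ?_⟩, fun ⟨hmem, h⟩ u => ?_⟩
  · rw [h.apply ⟨x, hx⟩, add_sub_cancel_left]
  · refine Λ.mem_graph_iff.2 ⟨⟨B u, hmem u u.2⟩, rfl, ?_⟩
    show _ = B (Λ u) + C u
    rw [h u u.2, add_sub_cancel]

theorem add (hA : IsCommutator Λ A C) (hB : IsCommutator Λ B D) :
    IsCommutator Λ (A + B) (C + D) := fun u => by
  simpa [add_add_add_comm] using add_mem (hA u) (hB u)

theorem mul (hA : IsCommutator Λ A C) (hB : IsCommutator Λ B D) :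
    IsCommutator Λ (A * B) (C * B + A * D) := fun u => by
  have h := hA ⟨B u, hB.mem_domain u⟩
  rw [hB.apply u] at h
  simpa [add_assoc, add_comm (C (B u))] using h

theorem algebraMap (c : 𝕜) : IsCommutator Λ (algebraMap 𝕜 (E →L[𝕜] E) c) 0 := fun u => by
  simpa using Λ.graph.smul_mem c (Λ.mem_graph u)

theorem inverse_of_mem_domain {T S : E →L[𝕜] E} (h : IsCommutator Λ T C) (hTS : T * S = 1)
    (hST : S * T = 1) (hS : ∀ x ∈ Λ.domain, S x ∈ Λ.domain) :
    IsCommutator Λ S (-(S * C * S)) := fun u => by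
  set v : Λ.domain := ⟨S u, hS u u.2⟩
  have hTv : (⟨T v, h.mem_domain v⟩ : Λ.domain) = u :=
    Subtype.ext (by simpa using congr($hTS u))
  have hΛu : Λ u = T (Λ v) + C (S u) := by
    rw [← h.apply v, hTv]
  have hΛv : S (Λ u) = Λ v + S (C (S u)) := by
    rw [hΛu, _root_.map_add, ← ContinuousLinearMap.comp_apply S T, ← ContinuousLinearMap.mul_def,
      hST, one_apply_eq_self]
  convert Λ.mem_graph v using 2
  simp [hΛv]

end IsCommutator

theorem exists_isCommutator_of_mem_adjoin {s : Set (E →L[𝕜] E)}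
    (hs : ∀ B ∈ s, ∃ C ∈ Algebra.adjoin 𝕜 s, IsCommutator Λ B C) :
    ∀ B ∈ Algebra.adjoin 𝕜 s, ∃ C ∈ Algebra.adjoin 𝕜 s, IsCommutator Λ B C := by
  intro B hB
  induction hB using Algebra.adjoin_induction with
  | mem B hB => exact hs B hB
  | algebraMap c => exact ⟨0, zero_mem _, .algebraMap c⟩
  | add A B _ _ hA hB =>
    obtain ⟨C, hC, hAC⟩ := hA
    obtain ⟨D, hD, hBD⟩ := hB
    exact ⟨C + D, add_mem hC hD, hAC.add hBD⟩
  | mul A B hA' hB' hA hB =>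
    obtain ⟨C, hC, hAC⟩ := hA
    obtain ⟨D, hD, hBD⟩ := hB
    exact ⟨C * B + A * D, add_mem (mul_mem hC hB') (mul_mem hA' hD), hAC.mul hBD⟩

end Commutator

section OPZero

variable {H : Type*} [NormedAddCommGroup H] [InnerProductSpace ℂ H] {Λ : H →ₗ.[ℂ] H}

theorem inOPZero_iff {T : H →L[ℂ] H} :
    InOPZero Λ T ↔ ∃ f : ℕ → H →L[ℂ] H, f 0 = T ∧ ∀ n, IsCommutator Λ (f n) (f (n + 1)) := by
  constructor
  · rintro ⟨f, hmem, hf0, hf⟩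
    exact ⟨f, hf0, fun n => isCommutator_iff.2 ⟨hmem n, hf n⟩⟩
  · rintro ⟨f, hf0, hf⟩
    choose hmem hf using fun n => isCommutator_iff.1 (hf n)
    exact ⟨f, hmem, hf0, hf⟩

theorem inOPZero_of_forall_exists_isCommutator {𝒜 : Set (H →L[ℂ] H)}
    (h𝒜 : ∀ B ∈ 𝒜, ∃ C ∈ 𝒜, IsCommutator Λ B C) {T : H →L[ℂ] H} (hT : T ∈ 𝒜) :
    InOPZero Λ T := by
  choose δ hδ𝒜 hδ using h𝒜
  let δ' : 𝒜 → 𝒜 := fun B => ⟨δ B B.2, hδ𝒜 B B.2⟩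
  refine inOPZero_iff.2 ⟨fun n => δ'^[n] ⟨T, hT⟩, rfl, fun n => ?_⟩
  simp only [Function.iterate_succ_apply']
  exact hδ _ _

end OPZero

section Resolvent

variable {H : Type*} [NormedAddCommGroup H] [InnerProductSpace ℂ H]

def LinearPMap.shifted (Λ : H →ₗ.[ℂ] H) (μ : ℂ) : Λ.domain →ₗ[ℂ] H :=
  Λ.toFun - μ • Λ.domain.subtype

theorem LinearPMap.shifted_apply (Λ : H →ₗ.[ℂ] H) (μ : ℂ) (u : Λ.domain) :
    Λ.shifted μ u = Λ u - μ • (u : H) :=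
  rfl

variable [CompleteSpace H] {Λ : H →ₗ.[ℂ] H} {μ : ℂ}

namespace IsSelfAdjoint

theorem inner_map_comm (hΛ : IsSelfAdjoint Λ) (u v : Λ.domain) :
    ⟪Λ u, (v : H)⟫_ℂ = ⟪(u : H), Λ v⟫_ℂ := by
  have h := adjoint_isFormalAdjoint (T := Λ) hΛ.dense_domain
  rw [isSelfAdjoint_def.1 hΛ] at h
  exact h u v

theorem im_inner_map_self (hΛ : IsSelfAdjoint Λ) (u : Λ.domain) :
    (⟪Λ u, (u : H)⟫_ℂ).im = 0 := by
  rw [← Complex.conj_eq_iff_im, inner_conj_symm, hΛ.inner_map_comm]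

theorem mem_domain_of_inner_eq (hΛ : IsSelfAdjoint Λ) {y w : H}
    (h : ∀ u : Λ.domain, ⟪w, (u : H)⟫_ℂ = ⟪y, Λ u⟫_ℂ) :
    ∃ hy : y ∈ Λ.domain, Λ ⟨y, hy⟩ = w := by
  have hy : y ∈ Λ†.domain := mem_adjoint_domain_of_exists y ⟨w, h⟩
  have hΛy : Λ† ⟨y, hy⟩ = w := adjoint_apply_eq hΛ.dense_domain ⟨y, hy⟩ h
  rw [← isSelfAdjoint_def.1 hΛ]
  exact ⟨hy, hΛy⟩

theorem abs_im_mul_norm_le_norm_shifted (hΛ : IsSelfAdjoint Λ) (μ : ℂ) (u : Λ.domain) :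
    |μ.im| * ‖(u : H)‖ ≤ ‖Λ.shifted μ u‖ := by
  have him : (⟪Λ.shifted μ u, (u : H)⟫_ℂ).im = μ.im * ‖(u : H)‖ ^ 2 := by
    rw [shifted_apply, inner_sub_left, inner_smul_left, Complex.sub_im, hΛ.im_inner_map_self,
      inner_self_eq_norm_sq_to_K]
    simp [Complex.mul_im, ← Complex.ofReal_pow]
  have hsq : |μ.im| * ‖(u : H)‖ ^ 2 ≤ ‖Λ.shifted μ u‖ * ‖(u : H)‖ :=
    calc |μ.im| * ‖(u : H)‖ ^ 2 = |(⟪Λ.shifted μ u, (u : H)⟫_ℂ).im| := by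
          rw [him, abs_mul, abs_of_nonneg (sq_nonneg ‖(u : H)‖)]
      _ ≤ ‖⟪Λ.shifted μ u, (u : H)⟫_ℂ‖ := Complex.abs_im_le_norm _
      _ ≤ ‖Λ.shifted μ u‖ * ‖(u : H)‖ := norm_inner_le_norm _ _
  rcases (norm_nonneg (u : H)).eq_or_lt with hu | hu
  · rw [← hu, mul_zero]
    exact norm_nonneg _
  · rw [sq, ← mul_assoc] at hsq
    exact le_of_mul_le_mul_right hsq hu

theorem injective_shifted (hΛ : IsSelfAdjoint Λ) (hμ : μ.im ≠ 0) :
    Function.Injective (Λ.shifted μ) := by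
  refine (injective_iff_map_eq_zero _).2 fun u hu => ?_
  have h := hΛ.abs_im_mul_norm_le_norm_shifted μ u
  rw [hu, norm_zero] at h
  have : ‖(u : H)‖ ≤ 0 := by nlinarith [abs_pos.2 hμ, norm_nonneg (u : H)]
  exact Submodule.coe_eq_zero.1 (norm_le_zero_iff.1 this)

theorem isClosed_range_shifted (hΛ : IsSelfAdjoint Λ) (hμ : μ.im ≠ 0) :
    IsClosed (LinearMap.range (Λ.shifted μ) : Set H) := by
  refine IsSeqClosed.isClosed fun v w hv hvw => ?_
  choose u hu using hv
  have hcau : CauchySeq fun n => (u n : H) := by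
    refine Metric.cauchySeq_iff.2 fun ε hε => ?_
    obtain ⟨N, hN⟩ :=
      Metric.cauchySeq_iff.1 hvw.cauchySeq (|μ.im| * ε) (mul_pos (abs_pos.2 hμ) hε)
    refine ⟨N, fun m hm n hn => lt_of_mul_lt_mul_left ?_ (abs_nonneg μ.im)⟩
    calc |μ.im| * dist (u m : H) (u n) ≤ dist (v m) (v n) := by
          rw [dist_eq_norm, dist_eq_norm, ← hu, ← hu, ← _root_.map_sub]
          exact hΛ.abs_im_mul_norm_le_norm_shifted μ (u m - u n)
      _ < |μ.im| * ε := hN m hm n hn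
  obtain ⟨y, hy⟩ := cauchySeq_tendsto_of_complete hcau
  have hgraph : (y, w + μ • y) ∈ Λ.graph := by
    refine IsClosed.mem_of_tendsto hΛ.isClosed (hy.prodMk_nhds (hvw.add (hy.const_smul μ)))
      (Filter.Eventually.of_forall fun n => ?_)
    rw [SetLike.mem_coe]
    convert Λ.mem_graph (u n) using 2
    rw [← hu n, shifted_apply, sub_add_cancel]
  obtain ⟨z, hz : (z : H) = y, hΛz⟩ := Λ.mem_graph_iff.1 hgraph
  refine ⟨z, ?_⟩
  rw [shifted_apply, hΛz, hz]
  exact add_sub_cancel_right w (μ • y)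

theorem orthogonal_range_shifted (hΛ : IsSelfAdjoint Λ) (hμ : μ.im ≠ 0) :
    (LinearMap.range (Λ.shifted μ))ᗮ = ⊥ := by
  refine (Submodule.eq_bot_iff _).2 fun v hv => ?_
  have hΛv : ∀ u : Λ.domain, ⟪(starRingEnd ℂ μ) • v, (u : H)⟫_ℂ = ⟪v, Λ u⟫_ℂ := by
    intro u
    have h0 := Submodule.inner_left_of_mem_orthogonal (LinearMap.mem_range_self _ u) hv
    rw [shifted_apply, inner_sub_right, inner_smul_right, sub_eq_zero] at h0
    rw [inner_smul_left, Complex.conj_conj, h0]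
  obtain ⟨hv', hΛv'⟩ := hΛ.mem_domain_of_inner_eq hΛv
  have h0 : Λ.shifted (starRingEnd ℂ μ) ⟨v, hv'⟩ = Λ.shifted (starRingEnd ℂ μ) 0 := by
    rw [shifted_apply, hΛv', sub_self, _root_.map_zero]
  exact congr(Subtype.val $(hΛ.injective_shifted (by simpa using hμ) h0))

theorem surjective_shifted (hΛ : IsSelfAdjoint Λ) (hμ : μ.im ≠ 0) :
    Function.Surjective (Λ.shifted μ) := by
  have := (hΛ.isClosed_range_shifted hμ).completeSpace_coe
  exact LinearMap.range_eq_top.1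
    (Submodule.orthogonal_eq_bot_iff.1 (hΛ.orthogonal_range_shifted hμ))

theorem exists_resolvent (hΛ : IsSelfAdjoint Λ) (hμ : μ.im ≠ 0) :
    ∃ R : H →L[ℂ] H, ‖R‖ ≤ |μ.im|⁻¹ ∧
      ∀ v, ∃ hv : R v ∈ Λ.domain, Λ.shifted μ ⟨R v, hv⟩ = v := by
  let e := LinearEquiv.ofBijective (Λ.shifted μ)
    ⟨hΛ.injective_shifted hμ, hΛ.surjective_shifted hμ⟩
  have hbound : ∀ v, ‖(e.symm v : H)‖ ≤ |μ.im|⁻¹ * ‖v‖ := fun v => by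
    rw [le_inv_mul_iff₀ (abs_pos.2 hμ)]
    have h := hΛ.abs_im_mul_norm_le_norm_shifted μ (e.symm v)
    rwa [show Λ.shifted μ (e.symm v) = v from e.apply_symm_apply v] at h
  exact ⟨(Λ.domain.subtype ∘ₗ e.symm.toLinearMap).mkContinuous _ hbound,
    LinearMap.mkContinuous_norm_le _ (by positivity) _,
    fun v => ⟨(e.symm v).2, e.apply_symm_apply v⟩⟩

end IsSelfAdjoint

end Resolvent

section Inverse

variable {H : Type*} [NormedAddCommGroup H] [InnerProductSpace ℂ H] [CompleteSpace H]
  {Λ : H →ₗ.[ℂ] H} {T S C : H →L[ℂ] H}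

theorem IsCommutator.inverse_mem_domain (hΛ : IsSelfAdjoint Λ) (h : IsCommutator Λ T C)
    (hTS : T * S = 1) (hST : S * T = 1) {x : H} (hx : x ∈ Λ.domain) : S x ∈ Λ.domain := by
  set t : ℝ := ‖S‖ * ‖C‖ + 1
  have ht : 0 < t := by positivity
  set μ : ℂ := t * Complex.I
  have hμ : μ.im = t := by simp [μ]
  obtain ⟨R, hR, hRΛ⟩ := hΛ.exists_resolvent (μ := μ) (hμ ▸ ht.ne')
  choose hRdom hΛR using hRΛ
  set K : H →L[ℂ] H := S * C * R
  have hK : ‖-K‖ < 1 :=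
    calc ‖-K‖ ≤ ‖S‖ * ‖C‖ * ‖R‖ := by
          rw [norm_neg]
          exact (norm_mul_le _ _).trans (by gcongr; exact norm_mul_le _ _)
      _ ≤ ‖S‖ * ‖C‖ * t⁻¹ := by
          rw [hμ, abs_of_pos ht] at hR
          gcongr
      _ < t * t⁻¹ := by gcongr; linarith
      _ = 1 := mul_inv_cancel₀ ht.ne'
  have hTS' (z : H) : T (S z) = z := by simpa using congr($hTS z)
  have hST' (z : H) : S (T z) = z := by simpa using congr($hST z)
  set y := Λ.shifted μ ⟨x, hx⟩
  set U := Units.oneSub (-K) hK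
  set w := (↑U⁻¹ : H →L[ℂ] H) (S y)
  have hw : w + K w = S y := by simpa [U, w] using congr($(U.mul_inv) (S y))
  set r : Λ.domain := ⟨R w, hRdom w⟩
  have key : Λ.shifted μ ⟨T r, h.mem_domain r⟩ = y :=
    calc Λ.shifted μ ⟨T r, h.mem_domain r⟩ = T (Λ.shifted μ r) + C r := by
          rw [shifted_apply, shifted_apply, h.apply, _root_.map_sub, _root_.map_smul]
          abel
      _ = T (w + K w) := by simp [r, hΛR, K, hTS']
      _ = y := by rw [hw, hTS']
  have hTr : T r = x := congr(Subtype.val $(hΛ.injective_shifted (hμ ▸ ht.ne') key))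
  rw [← hTr, hST']
  exact r.2

theorem IsCommutator.inverse (hΛ : IsSelfAdjoint Λ) (h : IsCommutator Λ T C) (hTS : T * S = 1)
    (hST : S * T = 1) : IsCommutator Λ S (-(S * C * S)) :=
  h.inverse_of_mem_domain hTS hST fun _ hx => h.inverse_mem_domain hΛ hTS hST hx

end Inverse

theorem inverse_in_OP_zero_general
    {H : Type*} [NormedAddCommGroup H] [InnerProductSpace ℂ H] [CompleteSpace H]
    (Λ : H →ₗ.[ℂ] H) (hΛsa : IsSelfAdjoint Λ)
    (T S : H →L[ℂ] H) (hTS : T ∘L S = 1) (hST : S ∘L T = 1)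
    (hT : InOPZero Λ T) :
    InOPZero Λ S ∧
      ∀ (hmem : ∀ x ∈ Λ.domain, S x ∈ Λ.domain) (x : H) (hx : x ∈ Λ.domain),
        Λ ⟨S x, hmem x hx⟩ - S (Λ ⟨x, hx⟩)
          = -(S (Λ ⟨x, hx⟩ - T (Λ ⟨S x, hmem x hx⟩))) := by
  obtain ⟨f, rfl, hf⟩ := inOPZero_iff.1 hT
  set 𝒜 := Algebra.adjoin ℂ (insert S (Set.range f))
  have hS𝒜 : S ∈ 𝒜 := Algebra.subset_adjoin (Set.mem_insert S _)
  have hf𝒜 (n : ℕ) : f n ∈ 𝒜 := Algebra.subset_adjoin (Set.mem_insert_of_mem S ⟨n, rfl⟩)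
  have hgen : ∀ B ∈ insert S (Set.range f), ∃ C ∈ 𝒜, IsCommutator Λ B C := by
    rintro B (rfl | ⟨n, rfl⟩)
    · exact ⟨_, neg_mem (mul_mem (mul_mem hS𝒜 (hf𝒜 1)) hS𝒜), (hf 0).inverse hΛsa hTS hST⟩
    · exact ⟨f (n + 1), hf𝒜 (n + 1), hf n⟩
  refine ⟨inOPZero_of_forall_exists_isCommutator (exists_isCommutator_of_mem_adjoin hgen) hS𝒜,
    fun hmem x hx => ?_⟩
  rw [_root_.map_sub, ← ContinuousLinearMap.comp_apply S, hST, one_apply_eq_self,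
    neg_sub]

/-- Let `D` be self-adjoint and `Λ = (1+D²)^{1/2}` (a self-adjoint operator
with `Λ² = 1 + D²`).  Let `T` be a bounded operator with bounded inverse `S`, preserving
`dom Λ`, with all iterated commutators `δⁿ(T) = [Λ, ·]ⁿ(T)` bounded (i.e. `T ∈ OP⁰(D)`).
Then all `δⁿ(T⁻¹)` are bounded (`T⁻¹ ∈ OP⁰(D)`); explicitly, `δ(T⁻¹) = -T⁻¹ δ(T) T⁻¹`. -/
theorem inverse_in_OP_zero
    {H : Type*} [NormedAddCommGroup H] [InnerProductSpace ℂ H] [CompleteSpace H]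
    (D Λ : H →ₗ.[ℂ] H) (hDsa : IsSelfAdjoint D) (hΛsa : IsSelfAdjoint Λ)
    (hΛpos : ∀ u : Λ.domain, 0 ≤ (⟪Λ u, (u : H)⟫_ℂ).re)
    -- `Λ² = 1 + D²`:
    (hΛsq : ∀ (x : H) (hx : x ∈ Λ.domain) (hx2 : Λ ⟨x, hx⟩ ∈ Λ.domain)
      (hxD : x ∈ D.domain) (hxD2 : D ⟨x, hxD⟩ ∈ D.domain),
      Λ ⟨Λ ⟨x, hx⟩, hx2⟩ = x + D ⟨D ⟨x, hxD⟩, hxD2⟩)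
    (T S : H →L[ℂ] H) (hTS : T ∘L S = 1) (hST : S ∘L T = 1)
    (hT : InOPZero Λ T) :
    InOPZero Λ S ∧
      ∀ (hmem : ∀ x ∈ Λ.domain, S x ∈ Λ.domain) (x : H) (hx : x ∈ Λ.domain),
        Λ ⟨S x, hmem x hx⟩ - S (Λ ⟨x, hx⟩)
          = -(S (Λ ⟨x, hx⟩ - T (Λ ⟨S x, hmem x hx⟩))) :=
  inverse_in_OP_zero_general Λ hΛsa T S hTS hST hT
end
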